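/- arXiv:1912.00332 — 5 statements merged into one kernel-verified Lean document; each statement's English description precedes it below -/
import Mathlib

section
/- Let f : ℝⁿ → ℝ be a multivariate quartic polynomial (a polynomial of total degree at most 4), with n ≥ 1. Then for every x ∈ ℝⁿ and t > 0, μ_f(x,t) = f(x) + (t²/6)·Σ_{i=1}^n f_{ii}(x) + ((1/120)·Σ_{i=1}^n f_{iiii} + (1/36)·Σ_{1≤i<j≤n} f_{iijj})·t⁴, where f_{ii} := ∂²f/∂x_i², f_{iiii} := ∂⁴f/∂x_i⁴ and f_{iijj} := ∂⁴f/∂x_i²∂x_j² (the fourth-order partial derivatives of a quartic polynomial are constants). -/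
open MeasureTheory Matrix Filter

/-- Partial derivative of `f` in the `i`-th coordinate direction. -/
noncomputable def pd {n : ℕ} (i : Fin n) (f : (Fin n → ℝ) → ℝ) : (Fin n → ℝ) → ℝ :=
  fun x => fderiv ℝ f x (Pi.single i 1)

/-- The gradient of `f` at `x`, as a vector of first partial derivatives. -/
noncomputable def grad {n : ℕ} (f : (Fin n → ℝ) → ℝ) (x : Fin n → ℝ) : Fin n → ℝ :=
  fun i => pd i f x

/-- The Hessian matrix of `f` at `x`, of second partial derivatives. -/
noncomputable def hess {n : ℕ} (f : (Fin n → ℝ) → ℝ) (x : Fin n → ℝ) :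
    Matrix (Fin n) (Fin n) ℝ :=
  Matrix.of fun i j => pd i (pd j f) x

/-- The Steklov function `μ_f(x,t) = (1/(2t)^n) ∫_{x-t}^{x+t} ⋯ ∫ f`. -/
noncomputable def steklov {n : ℕ} (f : (Fin n → ℝ) → ℝ) (x : Fin n → ℝ) (t : ℝ) : ℝ :=
  (1 / (2 * t) ^ n) * ∫ τ in Set.univ.pi (fun i => Set.Icc (x i - t) (x i + t)), f τ

/-- `f` is a multivariate quartic polynomial: a polynomial of total degree at most 4. -/
def IsMQP {n : ℕ} (f : (Fin n → ℝ) → ℝ) : Prop :=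
  ∃ P : MvPolynomial (Fin n) ℝ, P.totalDegree ≤ 4 ∧ ∀ x, f x = MvPolynomial.eval x P

/-- The closed Euclidean (ℓ₂) ball of radius `L` centered at `0` in `ℝⁿ`. -/
def ball2 {n : ℕ} (L : ℝ) : Set (Fin n → ℝ) := {y | ∑ i, (y i) ^ 2 ≤ L ^ 2}

/-- The Euclidean (ℓ₂) norm of a vector. -/
noncomputable def l2norm {m : ℕ} (v : Fin m → ℝ) : ℝ := Real.sqrt (∑ i, (v i) ^ 2)

/-!
Both sides are linear in the polynomial, so it suffices to treat a monomial `c xᵛ` with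
`∑ i, v i ≤ 4`. Its integral over the box factors into one-dimensional integrals, and for `d ≤ 4`
`(1/2t) ∫_{a-t}^{a+t} s^d ds = a^d + d(d-1)/6 a^{d-2} t² + d(d-1)(d-2)(d-3)/120 a^{d-4} t⁴`.
The correction of the `i`-th factor vanishes unless `v i ≥ 2`, so when the product is multiplied
out, products of three corrections vanish and a product of two reduces to its `t⁴` term. What
survives is the sum of the pure and mixed derivative terms.
-/

open MvPolynomial Finset

theorem hasFDerivAt_mvPolynomial_eval {σ : Type*} [Fintype σ] [DecidableEq σ]
    (P : MvPolynomial σ ℝ) (x : σ → ℝ) :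
    HasFDerivAt (fun y => eval y P)
      (∑ i, eval x (pderiv i P) • (ContinuousLinearMap.proj i : (σ → ℝ) →L[ℝ] ℝ)) x := by
  induction P using MvPolynomial.induction_on with
  | C a =>
    simp only [pderiv_C, map_zero, zero_smul, sum_const_zero, eval_C]
    exact hasFDerivAt_const a x
  | add p q hp hq =>
    simp only [map_add, add_smul, sum_add_distrib]
    exact hp.add hq
  | mul_X p j hp =>
    simp only [eval_mul, eval_X]
    refine (hp.mul (hasFDerivAt_apply j x)).congr_fderiv ?_
    simp [pderiv_X, Pi.single_apply, add_smul, mul_smul, sum_add_distrib,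
        smul_sum, apply_ite, ite_smul]

theorem pd_eval {n : ℕ} (i : Fin n) (P : MvPolynomial (Fin n) ℝ) :
    pd i (fun y => eval y P) = fun y => eval y (pderiv i P) := by
  funext x
  simp [pd, (hasFDerivAt_mvPolynomial_eval P x).fderiv, Pi.single_apply]

theorem setIntegral_univ_pi_prod {ι 𝕜 : Type*} [RCLike 𝕜] [Fintype ι] {E : ι → Type*}
    [∀ i, MeasureSpace (E i)] [∀ i, SigmaFinite (volume : Measure (E i))]
    (s : ∀ i, Set (E i)) (f : ∀ i, E i → 𝕜) :
    ∫ τ in Set.univ.pi s, ∏ i, f i (τ i) = ∏ i, ∫ y in s i, f i y := by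
  rw [volume_pi, Measure.restrict_pi_pi]
  exact integral_fintype_prod_eq_prod f

noncomputable def powMeanCorrection (d : ℕ) (a t : ℝ) : ℝ :=
  d.descFactorial 2 / 6 * a ^ (d - 2) * t ^ 2 + d.descFactorial 4 / 120 * a ^ (d - 4) * t ^ 4

theorem integral_Icc_sub_add_pow {d : ℕ} (hd : d ≤ 4) (a : ℝ) {t : ℝ} (ht : 0 ≤ t) :
    ∫ s in Set.Icc (a - t) (a + t), s ^ d = 2 * t * (a ^ d + powMeanCorrection d a t) := by
  rw [integral_Icc_eq_integral_Ioc, ← intervalIntegral.integral_of_le (by linarith), integral_pow]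
  interval_cases d <;> simp [powMeanCorrection, Nat.descFactorial] <;> ring

theorem powMeanCorrection_of_lt_two {d : ℕ} (hd : d < 2) (a t : ℝ) :
    powMeanCorrection d a t = 0 := by
  rw [powMeanCorrection, Nat.descFactorial_eq_zero_iff_lt.2 hd,
    Nat.descFactorial_eq_zero_iff_lt.2 (by omega : d < 4)]
  simp

theorem powMeanCorrection_of_lt_four {d : ℕ} (hd : d < 4) (a t : ℝ) :
    powMeanCorrection d a t = d.descFactorial 2 / 6 * a ^ (d - 2) * t ^ 2 := by
  rw [powMeanCorrection, Nat.descFactorial_eq_zero_iff_lt.2 hd]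
  simp

theorem powMeanCorrection_mul_powMeanCorrection {d e : ℕ} (hde : d + e ≤ 4) (a b t : ℝ) :
    powMeanCorrection d a t * powMeanCorrection e b t
      = d.descFactorial 2 / 6 * a ^ (d - 2) * (e.descFactorial 2 / 6 * b ^ (e - 2)) * t ^ 4 := by
  by_cases hd : d < 2
  · rw [powMeanCorrection_of_lt_two hd, Nat.descFactorial_eq_zero_iff_lt.2 hd]
    simp
  by_cases he : e < 2
  · rw [powMeanCorrection_of_lt_two he, Nat.descFactorial_eq_zero_iff_lt.2 he]
    simp
  rw [powMeanCorrection_of_lt_four (by omega), powMeanCorrection_of_lt_four (by omega)]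
  ring

theorem powMeanCorrection_mul_powMeanCorrection_mul_powMeanCorrection {d e f : ℕ}
    (hdef : d + e + f ≤ 4) (a b c t : ℝ) :
    powMeanCorrection d a t * powMeanCorrection e b t * powMeanCorrection f c t = 0 := by
  rcases (by omega : d < 2 ∨ e < 2 ∨ f < 2) with h | h | h <;>
    simp [powMeanCorrection_of_lt_two h]

theorem Finset.prod_erase_insert_of_ne {ι M : Type*} [CommMonoid M] [DecidableEq ι] (f : ι → M)
    {s : Finset ι} {a i : ι} (ha : a ∉ s) (hai : a ≠ i) :
    ∏ k ∈ (insert a s).erase i, f k = f a * ∏ k ∈ s.erase i, f k := by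
  rw [erase_insert_of_ne hai, prod_insert fun h => ha (mem_of_mem_erase h)]

theorem Finset.prod_add_eq_of_mul_mul_eq_zero {ι R : Type*} [CommSemiring R] [LinearOrder ι]
    (A D : ι → R) (hD : ∀ i j k, i ≠ j → i ≠ k → j ≠ k → D i * D j * D k = 0) (s : Finset ι) :
    ∏ i ∈ s, (A i + D i) = ∏ i ∈ s, A i + ∑ i ∈ s, D i * ∏ j ∈ s.erase i, A j
      + ∑ i ∈ s, ∑ j ∈ s with i < j, D i * D j * ∏ k ∈ (s.erase i).erase j, A k := by
  induction s using Finset.induction_on_max with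
  | empty => simp
  | insert a s ha ih =>
    have has : a ∉ s := fun h => lt_irrefl a (ha a h)
    have hne : ∀ i ∈ s, a ≠ i := fun i hi h => has (h ▸ hi)
    set S₁ := ∑ i ∈ s, D i * ∏ j ∈ s.erase i, A j
    set S₂ := ∑ i ∈ s, ∑ j ∈ s with i < j, D i * D j * ∏ k ∈ (s.erase i).erase j, A k
    have h₁ : ∑ i ∈ insert a s, D i * ∏ j ∈ (insert a s).erase i, A j
        = D a * ∏ j ∈ s, A j + A a * S₁ := by
      rw [sum_insert has, erase_insert has, mul_sum]
      congr 1
      refine sum_congr rfl fun i hi => ?_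
      rw [prod_erase_insert_of_ne A has (hne i hi), mul_left_comm]
    have h₂ : ∑ i ∈ insert a s, ∑ j ∈ insert a s with i < j,
          D i * D j * ∏ k ∈ ((insert a s).erase i).erase j, A k
        = D a * S₁ + A a * S₂ := by
      rw [sum_insert has, filter_insert, if_neg (lt_irrefl a),
        filter_false_of_mem fun j hj => (ha j hj).not_gt, sum_empty, zero_add,
        mul_sum, mul_sum, ← sum_add_distrib]
      refine sum_congr rfl fun i hi => ?_
      rw [filter_insert, if_pos (ha i hi), sum_insert fun h => has (mem_filter.1 h).1,
        erase_insert_of_ne (hne i hi), erase_insert fun h => has (mem_of_mem_erase h), mul_sum]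
      congr 1
      · ring
      · refine sum_congr rfl fun j hj => ?_
        rw [prod_erase_insert_of_ne A (fun h => has (mem_of_mem_erase h))
          (hne j (mem_filter.1 hj).1)]
        ring
    have h₃ : D a * S₂ = 0 := by
      simp only [S₂, mul_sum]
      refine sum_eq_zero fun i hi => sum_eq_zero fun j hj => ?_
      rw [← mul_assoc, ← mul_assoc, hD a i j (hne i hi) (hne j (mem_filter.1 hj).1)
        (mem_filter.1 hj).2.ne, zero_mul]
    rw [prod_insert has, prod_insert has, ih, h₁, h₂]
    calc (A a + D a) * (∏ i ∈ s, A i + S₁ + S₂)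
        = A a * ∏ i ∈ s, A i + (D a * ∏ j ∈ s, A j + A a * S₁) + (D a * S₁ + A a * S₂)
          + D a * S₂ := by ring
      _ = _ := by rw [h₃, add_zero]

theorem Finset.prod_pow_tsub_single {R σ : Type*} [CommMonoid R] [DecidableEq σ] (x : σ → R)
    (v : σ →₀ ℕ) {i : σ} (k : ℕ) {s : Finset σ} (hi : i ∈ s) :
    ∏ j ∈ s, x j ^ (v - Finsupp.single i k) j = x i ^ (v i - k) * ∏ j ∈ s.erase i, x j ^ v j := by
  rw [← mul_prod_erase s _ hi]
  congr 1
  · simp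
  · refine prod_congr rfl fun j hj => ?_
    rw [Finsupp.tsub_apply, Finsupp.single_eq_of_ne (ne_of_mem_erase hj), Nat.sub_zero]

theorem pderiv_iterate_monomial {R σ : Type*} [CommSemiring R] (i : σ) (k : ℕ) (v : σ →₀ ℕ)
    (c : R) : (pderiv i)^[k] (monomial v c) =
      monomial (v - Finsupp.single i k) (c * (v i).descFactorial k) := by
  classical
  induction k with
  | zero => simp
  | succ k ih =>
    rw [Function.iterate_succ_apply', ih, pderiv_monomial, tsub_tsub, ← Finsupp.single_add,
      Nat.descFactorial_succ]
    simp only [Finsupp.tsub_apply, Finsupp.single_eq_same]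
    rw [Nat.cast_mul]
    congr 1
    ring

theorem eval_pderiv_iterate_monomial {R σ : Type*} [CommSemiring R] [Fintype σ] [DecidableEq σ]
    (x : σ → R) (i : σ) (k : ℕ) (v : σ →₀ ℕ) (c : R) :
    eval x ((pderiv i)^[k] (monomial v c))
      = c * (v i).descFactorial k * x i ^ (v i - k) * ∏ j ∈ univ.erase i, x j ^ v j := by
  rw [pderiv_iterate_monomial, eval_monomial, Finsupp.prod_pow,
    prod_pow_tsub_single x v k (mem_univ i)]
  ring

theorem eval_pderiv_iterate_pderiv_iterate_monomial {R σ : Type*} [CommSemiring R] [Fintype σ]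
    [DecidableEq σ] (x : σ → R) {i j : σ} (hij : i ≠ j) (k l : ℕ) (v : σ →₀ ℕ) (c : R) :
    eval x ((pderiv i)^[k] ((pderiv j)^[l] (monomial v c)))
      = c * (v i).descFactorial k * (v j).descFactorial l * x i ^ (v i - k) * x j ^ (v j - l)
        * ∏ m ∈ (univ.erase i).erase j, x m ^ v m := by
  rw [pderiv_iterate_monomial, pderiv_iterate_monomial, eval_monomial, Finsupp.prod_pow,
    prod_pow_tsub_single x _ k (mem_univ i),
    prod_pow_tsub_single x v l (mem_erase.2 ⟨hij.symm, mem_univ j⟩)]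
  simp only [Finsupp.tsub_apply, Finsupp.single_eq_of_ne hij, Nat.sub_zero]
  ring

section

variable {n : ℕ} (x : Fin n → ℝ) (t : ℝ)

noncomputable def steklovPoly : MvPolynomial (Fin n) ℝ →ₗ[ℝ] ℝ where
  toFun Q := steklov (fun y => eval y Q) x t
  map_add' P Q := by
    have hint (R : MvPolynomial (Fin n) ℝ) :
        IntegrableOn (fun y => eval y R) (Set.univ.pi fun i => Set.Icc (x i - t) (x i + t)) :=
      (continuous_eval R).continuousOn.integrableOn_compact
        (isCompact_univ_pi fun _ => isCompact_Icc)
    simp only [steklov, map_add, integral_add (hint P) (hint Q), mul_add]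
  map_smul' c Q := by
    simp only [steklov, smul_eval, integral_const_mul, RingHom.id_apply, smul_eq_mul]
    ring

noncomputable def steklovExpansion : MvPolynomial (Fin n) ℝ →ₗ[ℝ] ℝ where
  toFun Q := eval x Q + (t ^ 2 / 6) * (∑ i, eval x (pderiv i (pderiv i Q)))
    + ((1 / 120) * (∑ i, eval x (pderiv i (pderiv i (pderiv i (pderiv i Q)))))
      + (1 / 36) * (∑ i, ∑ j ∈ univ.filter (fun j => i < j),
          eval x (pderiv i (pderiv i (pderiv j (pderiv j Q)))))) * t ^ 4
  map_add' P Q := by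
    simp only [map_add, sum_add_distrib]
    ring
  map_smul' c Q := by
    simp only [Derivation.map_smul, smul_eval, ← mul_sum, RingHom.id_apply, smul_eq_mul]
    ring

theorem steklovPoly_monomial (ht : 0 < t) {v : Fin n →₀ ℕ} (hv : ∀ i, v i ≤ 4) (c : ℝ) :
    steklovPoly x t (monomial v c) = c * ∏ i, (x i ^ v i + powMeanCorrection (v i) (x i) t) := by
  have h2t : (2 * t) ^ n ≠ 0 := by positivity
  simp only [steklovPoly, LinearMap.coe_mk, AddHom.coe_mk, steklov, eval_monomial,
    Finsupp.prod_pow]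
  rw [integral_const_mul,
    setIntegral_univ_pi_prod (fun i => Set.Icc (x i - t) (x i + t)) (fun i s => s ^ v i)]
  simp only [integral_Icc_sub_add_pow (hv _) _ ht.le, prod_mul_distrib, prod_const, card_univ,
    Fintype.card_fin]
  field_simp
  ring

theorem steklovExpansion_monomial (v : Fin n →₀ ℕ) (c : ℝ) :
    steklovExpansion x t (monomial v c) = c * (∏ i, x i ^ v i
      + t ^ 2 / 6 * ∑ i, (v i).descFactorial 2 * x i ^ (v i - 2) * ∏ j ∈ univ.erase i, x j ^ v j
      + (1 / 120 * ∑ i, (v i).descFactorial 4 * x i ^ (v i - 4) * ∏ j ∈ univ.erase i, x j ^ v j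
        + 1 / 36 * ∑ i, ∑ j ∈ univ.filter (fun j => i < j),
          (v i).descFactorial 2 * (v j).descFactorial 2 * x i ^ (v i - 2) * x j ^ (v j - 2)
            * ∏ k ∈ (univ.erase i).erase j, x k ^ v k) * t ^ 4) := by
  have h22 : ∑ i, ∑ j ∈ univ.filter (fun j => i < j),
      eval x ((pderiv i)^[2] ((pderiv j)^[2] (monomial v c))) = c * ∑ i, ∑ j ∈ univ.filter
        (fun j => i < j), (v i).descFactorial 2 * (v j).descFactorial 2 * x i ^ (v i - 2)
          * x j ^ (v j - 2) * ∏ k ∈ (univ.erase i).erase j, x k ^ v k := by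
    simp only [mul_sum]
    refine sum_congr rfl fun i _ => sum_congr rfl fun j hj => ?_
    rw [eval_pderiv_iterate_pderiv_iterate_monomial x (mem_filter.1 hj).2.ne]
    ring
  have iterate_four (i : Fin n) (Q : MvPolynomial (Fin n) ℝ) :
      pderiv i (pderiv i (pderiv i (pderiv i Q))) = (pderiv i)^[4] Q := rfl
  have iterate_two (i : Fin n) (Q : MvPolynomial (Fin n) ℝ) :
      pderiv i (pderiv i Q) = (pderiv i)^[2] Q := rfl
  have hk (k : ℕ) : ∑ i, eval x ((pderiv i)^[k] (monomial v c))
      = c * ∑ i, (v i).descFactorial k * x i ^ (v i - k) * ∏ j ∈ univ.erase i, x j ^ v j := by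
    rw [mul_sum]
    exact sum_congr rfl fun i _ => by rw [eval_pderiv_iterate_monomial]; ring
  simp only [steklovExpansion, LinearMap.coe_mk, AddHom.coe_mk, iterate_four]
  simp only [iterate_two, hk, h22, eval_monomial, Finsupp.prod_pow]
  ring

theorem steklovPoly_monomial_eq_steklovExpansion (ht : 0 < t) {v : Fin n →₀ ℕ}
    (hv : ∑ i, v i ≤ 4) (c : ℝ) :
    steklovPoly x t (monomial v c) = steklovExpansion x t (monomial v c) := by
  set A : Fin n → ℝ := fun i => x i ^ v i
  set D : Fin n → ℝ := fun i => powMeanCorrection (v i) (x i) t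
  have sum_le (s : Finset (Fin n)) : ∑ i ∈ s, v i ≤ 4 :=
    (sum_le_sum_of_subset (subset_univ s)).trans hv
  have hDDD (i j k : Fin n) (hij : i ≠ j) (hik : i ≠ k) (hjk : j ≠ k) : D i * D j * D k = 0 := by
    have := sum_le {i, j, k}
    rw [sum_insert (by simp [hij, hik]), sum_pair hjk, ← add_assoc] at this
    exact powMeanCorrection_mul_powMeanCorrection_mul_powMeanCorrection this _ _ _ _
  have hsingle : ∑ i, D i * ∏ j ∈ univ.erase i, A j
      = t ^ 2 / 6 * ∑ i, (v i).descFactorial 2 * x i ^ (v i - 2) * ∏ j ∈ univ.erase i, A j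
        + 1 / 120 * (∑ i, (v i).descFactorial 4 * x i ^ (v i - 4) * ∏ j ∈ univ.erase i, A j)
          * t ^ 4 := by
    simp only [mul_sum, sum_mul, ← sum_add_distrib]
    exact sum_congr rfl fun i _ => by simp only [D, powMeanCorrection]; ring
  have hpair : ∑ i, ∑ j ∈ univ.filter (fun j => i < j),
        D i * D j * ∏ k ∈ (univ.erase i).erase j, A k
      = 1 / 36 * (∑ i, ∑ j ∈ univ.filter (fun j => i < j), (v i).descFactorial 2
        * (v j).descFactorial 2 * x i ^ (v i - 2) * x j ^ (v j - 2)
          * ∏ k ∈ (univ.erase i).erase j, A k) * t ^ 4 := by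
    simp only [mul_sum, sum_mul]
    refine sum_congr rfl fun i _ => sum_congr rfl fun j hj => ?_
    have := sum_le {i, j}
    rw [sum_pair (mem_filter.1 hj).2.ne] at this
    simp only [D, powMeanCorrection_mul_powMeanCorrection this]
    ring
  rw [steklovPoly_monomial x t ht (fun i => (single_le_sum (fun j _ => Nat.zero_le (v j))
      (mem_univ i)).trans hv), steklovExpansion_monomial, prod_add_eq_of_mul_mul_eq_zero A D hDDD,
    hsingle, hpair]
  ring

theorem steklovPoly_eq_steklovExpansion (ht : 0 < t) {P : MvPolynomial (Fin n) ℝ}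
    (hP : P.totalDegree ≤ 4) : steklovPoly x t P = steklovExpansion x t P := by
  rw [P.as_sum, map_sum, map_sum]
  refine sum_congr rfl fun v hv => steklovPoly_monomial_eq_steklovExpansion x t ht ?_ _
  have := (le_totalDegree hv).trans hP
  rwa [Finsupp.sum_fintype _ _ fun _ => rfl] at this

end

theorem steklov_multivariate_quartic_general {n : ℕ}
    (f : (Fin n → ℝ) → ℝ) (hf : IsMQP f) (x : Fin n → ℝ) (t : ℝ) (ht : 0 < t) :
    steklov f x t
      = f x + (t ^ 2 / 6) * (∑ i, pd i (pd i f) x)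
        + ((1 / 120) * (∑ i, pd i (pd i (pd i (pd i f))) x)
            + (1 / 36) * (∑ i, ∑ j ∈ Finset.univ.filter (fun j => i < j),
                pd i (pd i (pd j (pd j f))) x)) * t ^ 4 := by
  obtain ⟨P, hP, hfP⟩ := hf
  obtain rfl : f = fun y => eval y P := funext hfP
  simp only [pd_eval]
  exact steklovPoly_eq_steklovExpansion x t ht hP

/-- **Steklov Polynomial.** For a multivariate quartic polynomial `f : ℝⁿ → ℝ` (`n ≥ 1`),
`μ_f(x,t) = f(x) + (t²/6) Σᵢ f_{ii}(x) + ((1/120) Σᵢ f_{iiii} + (1/36) Σ_{i<j} f_{iijj}) t⁴`. -/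
theorem steklov_multivariate_quartic {n : ℕ} (hn : 1 ≤ n)
    (f : (Fin n → ℝ) → ℝ) (hf : IsMQP f) (x : Fin n → ℝ) (t : ℝ) (ht : 0 < t) :
    steklov f x t
      = f x + (t ^ 2 / 6) * (∑ i, pd i (pd i f) x)
        + ((1 / 120) * (∑ i, pd i (pd i (pd i (pd i f))) x)
            + (1 / 36) * (∑ i, ∑ j ∈ Finset.univ.filter (fun j => i < j),
                pd i (pd i (pd j (pd j f))) x)) * t ^ 4 :=
  steklov_multivariate_quartic_general f hf x t ht
end

section
/- Let f : ℝⁿ → ℝ be a multivariate quartic polynomial that can be written as f(x) = g(x)ᵀ G g(x) + cᵀ h(x), where g : ℝⁿ → ℝᵖ and h : ℝⁿ → ℝʳ are vector-valued polynomial maps of degree at most 2, G ∈ ℝᵖˣᵖ is symmetric positive definite with smallest eigenvalue λ > 0, and c ∈ ℝʳ. Assume: (i) there exist L₁, R > 0 such that ‖h(x)‖ ≤ R·‖g(x)‖ whenever ‖x‖ > L₁; and (ii)(a) f(0) ≠ 0 and there exists L > L₁ such that ‖g(x)‖ > max{|f(0)|, (1 + ‖c‖R)/λ} whenever ‖x‖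 > L. Then f(x) > f(0) for every x with ‖x‖ > L; consequently every global minimizer x* of f satisfies ‖x*‖ ≤ L, i.e., argmin f ⊆ B[0,L]. -/
open MeasureTheory Matrix Filter

lemma l2norm_nonneg' {m : ℕ} (v : Fin m → ℝ) : 0 ≤ l2norm v := Real.sqrt_nonneg _

lemma l2norm_sq' {m : ℕ} (v : Fin m → ℝ) : l2norm v ^ 2 = ∑ i, (v i) ^ 2 :=
  Real.sq_sqrt (Finset.sum_nonneg fun i _ => sq_nonneg _)

lemma abs_dot_le' {m : ℕ} (a b : Fin m → ℝ) : |a ⬝ᵥ b| ≤ l2norm a * l2norm b := by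
  have h1 : (a ⬝ᵥ b) ^ 2 ≤ (l2norm a * l2norm b) ^ 2 := by
    rw [mul_pow, l2norm_sq', l2norm_sq']
    simpa [dotProduct] using Finset.sum_mul_sq_le_sq_mul_sq Finset.univ a b
  calc |a ⬝ᵥ b| = Real.sqrt ((a ⬝ᵥ b) ^ 2) := (Real.sqrt_sq_eq_abs _).symm
    _ ≤ Real.sqrt ((l2norm a * l2norm b) ^ 2) := Real.sqrt_le_sqrt h1
    _ = l2norm a * l2norm b := Real.sqrt_sq (mul_nonneg (l2norm_nonneg' a) (l2norm_nonneg' b))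

lemma quad_lower {p : ℕ} (G : Matrix (Fin p) (Fin p) ℝ) (lam : ℝ)
    (hlam₁ : ∀ v : Fin p → ℝ, (∑ i, (v i) ^ 2) = 1 → lam ≤ v ⬝ᵥ G.mulVec v)
    (v : Fin p → ℝ) : lam * (∑ i, (v i) ^ 2) ≤ v ⬝ᵥ G.mulVec v := by
  by_cases hv : (∑ i, (v i) ^ 2) = 0
  · have hv0 : v = 0 := by
      funext i
      have := (Finset.sum_eq_zero_iff_of_nonneg (fun i _ => sq_nonneg (v i))).mp hv i
        (Finset.mem_univ i)
      exact pow_eq_zero_iff (by norm_num) |>.mp this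
    simp [hv0]
  · have hvpos : 0 < (∑ i, (v i) ^ 2) :=
      lt_of_le_of_ne (Finset.sum_nonneg fun i _ => sq_nonneg _) (Ne.symm hv)
    set t : ℝ := Real.sqrt (∑ i, (v i) ^ 2) with ht
    have htpos : 0 < t := Real.sqrt_pos.mpr hvpos
    have ht2 : t ^ 2 = ∑ i, (v i) ^ 2 := Real.sq_sqrt hvpos.le
    have hw : (∑ i, ((t⁻¹ • v) i) ^ 2) = 1 := by
      simp only [Pi.smul_apply, smul_eq_mul, mul_pow, ← Finset.mul_sum]
      rw [← ht2]
      field_simp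
    have h2 := hlam₁ _ hw
    have hbil : (t⁻¹ • v) ⬝ᵥ G.mulVec (t⁻¹ • v) = t⁻¹ * (t⁻¹ * (v ⬝ᵥ G.mulVec v)) := by
      rw [Matrix.mulVec_smul, smul_dotProduct, dotProduct_smul]
      simp [smul_eq_mul]
    rw [hbil] at h2
    have h3 : lam * t ^ 2 ≤ v ⬝ᵥ G.mulVec v := by
      have := mul_le_mul_of_nonneg_left h2 (le_of_lt (by positivity : (0:ℝ) < t ^ 2))
      calc lam * t ^ 2 = t ^ 2 * lam := by ring
        _ ≤ t ^ 2 * (t⁻¹ * (t⁻¹ * (v ⬝ᵥ G.mulVec v))) := this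
        _ = v ⬝ᵥ G.mulVec v := by field_simp
    rwa [ht2] at h3

/-- A bound on the norm of the global minimizers of `f(x) = g(x)ᵀGg(x) + cᵀh(x)`, where `g, h`
are vector-valued polynomial maps of degree at most 2 and `G` is positive definite with
smallest eigenvalue `λ > 0`: under growth conditions (i) and (ii)(a) (the case `f(0) ≠ 0`),
`f(x) > f(0)` whenever `‖x‖ > L`, and hence `argmin f ⊆ B[0,L]`. -/
theorem minimizers_in_ball_of_f0_ne_zero {n p r : ℕ}
    (g : (Fin n → ℝ) → (Fin p → ℝ)) (h : (Fin n → ℝ) → (Fin r → ℝ))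
    (hg : ∀ k : Fin p, ∃ P : MvPolynomial (Fin n) ℝ, P.totalDegree ≤ 2 ∧
      ∀ x, g x k = MvPolynomial.eval x P)
    (hh : ∀ k : Fin r, ∃ P : MvPolynomial (Fin n) ℝ, P.totalDegree ≤ 2 ∧
      ∀ x, h x k = MvPolynomial.eval x P)
    (G : Matrix (Fin p) (Fin p) ℝ) (hGsymm : G.IsSymm) (hGpd : G.PosDef)
    (lam : ℝ)
    (hlam₁ : ∀ v : Fin p → ℝ, (∑ i, (v i) ^ 2) = 1 → lam ≤ v ⬝ᵥ G.mulVec v)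
    (hlam₂ : ∃ v : Fin p → ℝ, (∑ i, (v i) ^ 2) = 1 ∧ v ⬝ᵥ G.mulVec v = lam)
    (hlampos : 0 < lam)
    (c : Fin r → ℝ)
    (f : (Fin n → ℝ) → ℝ) (hfMQP : IsMQP f)
    (hf : ∀ x, f x = g x ⬝ᵥ G.mulVec (g x) + c ⬝ᵥ h x)
    (L₁ R : ℝ) (hL₁ : 0 < L₁) (hR : 0 < R)
    (hi : ∀ x : Fin n → ℝ, L₁ < l2norm x → l2norm (h x) ≤ R * l2norm (g x))
    (hf0 : f 0 ≠ 0)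
    (L : ℝ) (hL : L₁ < L)
    (hii : ∀ x : Fin n → ℝ, L < l2norm x →
      max |f 0| ((1 + l2norm c * R) / lam) < l2norm (g x)) :
    (∀ x : Fin n → ℝ, L < l2norm x → f 0 < f x)
    ∧ ∀ xs : Fin n → ℝ, (∀ y, f xs ≤ f y) → l2norm xs ≤ L :=  by
  have key : ∀ x : Fin n → ℝ, L < l2norm x → f 0 < f x := by
    intro x hx
    have hgt := hii x hx
    have hmax1 : |f 0| < l2norm (g x) := lt_of_le_of_lt (le_max_left _ _) hgt
    have hmax2 : (1 + l2norm c * R) / lam < l2norm (g x) :=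
      lt_of_le_of_lt (le_max_right _ _) hgt
    have hspos : 0 < l2norm (g x) := lt_of_le_of_lt (abs_nonneg _) hmax1
    have hlam_s : 1 + l2norm c * R < lam * l2norm (g x) := by
      have := (div_lt_iff₀ hlampos).mp hmax2
      linarith [mul_comm lam (l2norm (g x))]
    have hquad := quad_lower G lam hlam₁ (g x)
    rw [← l2norm_sq'] at hquad
    have hhx : l2norm (h x) ≤ R * l2norm (g x) := hi x (lt_trans hL hx)
    have hcs : |c ⬝ᵥ h x| ≤ l2norm c * l2norm (h x) := abs_dot_le' c (h x)
    have hch : -(l2norm c * (R * l2norm (g x))) ≤ c ⬝ᵥ h x := by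
      have h1 : l2norm c * l2norm (h x) ≤ l2norm c * (R * l2norm (g x)) :=
        mul_le_mul_of_nonneg_left hhx (l2norm_nonneg' c)
      have h2 := neg_abs_le (c ⬝ᵥ h x)
      linarith
    have hfx : f x = g x ⬝ᵥ G.mulVec (g x) + c ⬝ᵥ h x := hf x
    have hf0le : f 0 ≤ |f 0| := le_abs_self _
    nlinarith [hspos, sq_nonneg (l2norm (g x))]
  refine ⟨key, fun xs hmin => ?_⟩
  by_contra hlt
  push_neg at hlt
  exact absurd (hmin 0) (not_le.mpr (key xs hlt))
end

section
/- Let f : ℝⁿ → ℝ be a multivariate quartic polynomial that can be written as f(x) = g(x)ᵀ G g(x) + cᵀ h(x), where g : ℝⁿ → ℝᵖ and h : ℝⁿ → ℝʳ are vector-valued polynomial maps of degree at most 2, G ∈ ℝᵖˣᵖ is symmetric positive definite with smallest eigenvalue λ > 0, and c ∈ ℝʳ. Assume: (i) there exist L₁, R > 0 such that ‖h(x)‖ ≤ R·‖g(x)‖ whenever ‖x‖ > L₁; and (ii)(b) f(0) = 0 and there exists L > L₁ such that ‖g(x)‖ > ‖c‖R/λ whenever ‖x‖ > L. Then f(x)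 > 0 = f(0) for every x with ‖x‖ > L; consequently every global minimizer x* of f satisfies ‖x*‖ ≤ L, i.e., argmin f ⊆ B[0,L]. -/
open MeasureTheory Matrix Filter

/-- A bound on the norm of the global minimizers of `f(x) = g(x)ᵀGg(x) + cᵀh(x)`, where `g, h`
are vector-valued polynomial maps of degree at most 2 and `G` is positive definite with
smallest eigenvalue `λ > 0`: under growth conditions (i) and (ii)(b) (the case `f(0) = 0`),
`f(x) > 0 = f(0)` whenever `‖x‖ > L`, and hence `argmin f ⊆ B[0,L]`. -/
theorem minimizers_in_ball_of_f0_eq_zero {n p r : ℕ}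
    (g : (Fin n → ℝ) → (Fin p → ℝ)) (h : (Fin n → ℝ) → (Fin r → ℝ))
    (hg : ∀ k : Fin p, ∃ P : MvPolynomial (Fin n) ℝ, P.totalDegree ≤ 2 ∧
      ∀ x, g x k = MvPolynomial.eval x P)
    (hh : ∀ k : Fin r, ∃ P : MvPolynomial (Fin n) ℝ, P.totalDegree ≤ 2 ∧
      ∀ x, h x k = MvPolynomial.eval x P)
    (G : Matrix (Fin p) (Fin p) ℝ) (hGsymm : G.IsSymm) (hGpd : G.PosDef)
    (lam : ℝ)
    (hlam₁ : ∀ v : Fin p → ℝ, (∑ i, (v i) ^ 2) = 1 → lam ≤ v ⬝ᵥ G.mulVec v)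
    (hlam₂ : ∃ v : Fin p → ℝ, (∑ i, (v i) ^ 2) = 1 ∧ v ⬝ᵥ G.mulVec v = lam)
    (hlampos : 0 < lam)
    (c : Fin r → ℝ)
    (f : (Fin n → ℝ) → ℝ) (hfMQP : IsMQP f)
    (hf : ∀ x, f x = g x ⬝ᵥ G.mulVec (g x) + c ⬝ᵥ h x)
    (L₁ R : ℝ) (hL₁ : 0 < L₁) (hR : 0 < R)
    (hi : ∀ x : Fin n → ℝ, L₁ < l2norm x → l2norm (h x) ≤ R * l2norm (g x))
    (hf0 : f 0 = 0)
    (L : ℝ) (hL : L₁ < L)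
    (hii : ∀ x : Fin n → ℝ, L < l2norm x → l2norm c * R / lam < l2norm (g x)) :
    (∀ x : Fin n → ℝ, L < l2norm x → 0 < f x ∧ f 0 < f x)
    ∧ ∀ xs : Fin n → ℝ, (∀ y, f xs ≤ f y) → l2norm xs ≤ L := by

  have key : ∀ x : Fin n → ℝ, L < l2norm x → 0 < f x := by
    intro x hx
    have hg0 : l2norm c * R / lam < l2norm (g x) := hii x hx
    have hh' : l2norm (h x) ≤ R * l2norm (g x) := hi x (lt_trans hL hx)
    have hcn : 0 ≤ l2norm c := Real.sqrt_nonneg _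
    have hhn : 0 ≤ l2norm (h x) := Real.sqrt_nonneg _
    have hgpos : 0 < l2norm (g x) := lt_of_le_of_lt (by positivity) hg0
    have hsum : ∑ i, (g x i) ^ 2 = (l2norm (g x)) ^ 2 := by
      rw [l2norm, Real.sq_sqrt]; positivity
    -- quadratic form lower bound
    have hquad : lam * (l2norm (g x)) ^ 2 ≤ g x ⬝ᵥ G.mulVec (g x) := by
      set a := l2norm (g x) with ha
      set v : Fin p → ℝ := a⁻¹ • g x with hv
      have hvnorm : ∑ i, (v i) ^ 2 = 1 := by
        simp only [hv, Pi.smul_apply, smul_eq_mul, mul_pow, ← Finset.mul_sum, hsum]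
        field_simp
      have h1 := hlam₁ v hvnorm
      have h2 : v ⬝ᵥ G.mulVec v = a⁻¹ * a⁻¹ * (g x ⬝ᵥ G.mulVec (g x)) := by
        rw [hv, smul_dotProduct, Matrix.mulVec_smul, dotProduct_smul]
        simp [smul_eq_mul]; ring
      rw [h2] at h1
      have hane : a ≠ 0 := ne_of_gt hgpos
      have := mul_le_mul_of_nonneg_left h1 (le_of_lt (mul_pos hgpos hgpos))
      calc lam * a ^ 2 = a * a * lam := by ring
        _ ≤ a * a * (a⁻¹ * a⁻¹ * (g x ⬝ᵥ G.mulVec (g x))) := this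
        _ = g x ⬝ᵥ G.mulVec (g x) := by field_simp
    -- Cauchy-Schwarz lower bound on c ⬝ᵥ h x
    have hcs : -(l2norm c * l2norm (h x)) ≤ c ⬝ᵥ h x := by
      have heq : (∑ i, (-(c i)) ^ 2) = ∑ i, (c i) ^ 2 := by
        apply Finset.sum_congr rfl; intro i _; ring
      rw [l2norm, l2norm]
      have h3 : ∑ i, -(c i * h x i) ≤
          Real.sqrt (∑ i, (c i) ^ 2) * Real.sqrt (∑ i, (h x i) ^ 2) := by
        calc ∑ i, -(c i * h x i) = ∑ i, (-(c i)) * h x i := by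
              apply Finset.sum_congr rfl; intro i _; ring
          _ ≤ Real.sqrt (∑ i, (-(c i)) ^ 2) * Real.sqrt (∑ i, (h x i) ^ 2) :=
              Real.sum_mul_le_sqrt_mul_sqrt _ _ _
          _ = Real.sqrt (∑ i, (c i) ^ 2) * Real.sqrt (∑ i, (h x i) ^ 2) := by rw [heq]
      have h4 : c ⬝ᵥ h x = ∑ i, c i * h x i := rfl
      have h5 : ∑ i, -(c i * h x i) = -(∑ i, c i * h x i) := by
        rw [← Finset.sum_neg_distrib]
      rw [h4]
      linarith [h3, h5.symm ▸ h3]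
    have hlb : l2norm c * R < lam * l2norm (g x) := by
      rw [div_lt_iff₀ hlampos] at hg0
      nlinarith
    rw [hf]
    nlinarith [mul_le_mul_of_nonneg_left hh' hcn, mul_lt_mul_of_pos_right hlb hgpos]
  refine ⟨fun x hx => ⟨key x hx, by rw [hf0]; exact key x hx⟩, fun xs hmin => ?_⟩
  by_contra hc
  push_neg at hc
  have := key xs hc
  have := hmin 0
  linarith [hf0 ▸ this, hmin 0, hf0]
end

section
/- Let f : ℝⁿ → ℝ be the normal polynomial f(x) = Σ_{i=1}^n a_i x_i⁴ + xᵀBx + dᵀx with B symmetric and not positive semidefinite (so its smallest eigenvalue λ_n(B) < 0), and with a_k := min_{i=1,…,n} a_i > 0. Set t₀ := √(|λ_n(B)| / (2a_k)). Then for every t > t₀ and every x ∈ ℝⁿ, the matrix ∇_{xx}μ_f(x,t) = 12·diag(a₁x₁², …, a_n x_n²) + 2B + 4t²·diag(a) is positive definite; hence μ_f(·,t) is convex on all of ℝⁿ for every t > t₀. -/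
/-!
Averaging over the cube `[x - t, x + t]ⁿ` turns a monomial into the product of the
one-dimensional averages of its factors, so for the normal quartic `f` the Steklov function is
explicit again:
`μ_f(y,t) = Σ aᵢ yᵢ⁴ + yᵀ (B + 2t² diag a) y + dᵀy + const`.
Since `aᵢ ≥ a_k`, the matrix `B + 2t² diag a` has Rayleigh quotients at least `λₙ(B) + 2t² a_k`,
which is positive exactly when `t > t₀`. Then `μ_f(·,t)` is a convex quartic part plus a positive
definite quadratic form, and its Hessian `2 (B + 2t² diag a) + 12 diag(aᵢ yᵢ²)` is positive
definite.
-/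

open MeasureTheory Matrix Filter

open Set

section

variable {ι : Type*} [Fintype ι]

theorem mul_sum_sq_le_dotProduct_mulVec {B : Matrix ι ι ℝ} {c : ℝ}
    (hc : ∀ v : ι → ℝ, ∑ i, v i ^ 2 = 1 → c ≤ v ⬝ᵥ B *ᵥ v) (v : ι → ℝ) :
    c * ∑ i, v i ^ 2 ≤ v ⬝ᵥ B *ᵥ v := by
  obtain hv | hv := (Finset.sum_nonneg fun i _ => sq_nonneg (v i)).eq_or_lt
  · obtain rfl : v = 0 := funext fun i => pow_eq_zero_iff two_ne_zero |>.1 <|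
      (Finset.sum_eq_zero_iff_of_nonneg fun i _ => sq_nonneg (v i)).1 hv.symm i (Finset.mem_univ i)
    simp
  · set r := √(∑ i, v i ^ 2)
    have hr : 0 < r := Real.sqrt_pos.2 hv
    have hr2 : r ^ 2 = ∑ i, v i ^ 2 := Real.sq_sqrt hv.le
    have hunit : ∑ i, (r⁻¹ • v) i ^ 2 = 1 := by
      simp only [Pi.smul_apply, smul_eq_mul, mul_pow, ← Finset.mul_sum, ← hr2, inv_pow]
      exact inv_mul_cancel₀ (by positivity)
    have := hc _ hunit
    rw [mulVec_smul, dotProduct_smul, smul_dotProduct, smul_eq_mul, smul_eq_mul, ← mul_assoc,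
      ← sq, inv_pow, hr2, le_inv_mul_iff₀ hv] at this
    linarith

theorem posDef_add_smul_diagonal [DecidableEq ι] {B : Matrix ι ι ℝ} (hB : B.IsSymm)
    {a : ι → ℝ} {c m s : ℝ} (hBc : ∀ v : ι → ℝ, c * ∑ i, v i ^ 2 ≤ v ⬝ᵥ B *ᵥ v)
    (ham : ∀ i, m ≤ a i) (hs : 0 ≤ s) (hpos : 0 < c + s * m) :
    (B + s • diagonal a).PosDef := by
  refine .of_dotProduct_mulVec_pos ?_ fun v hv => ?_
  · exact isHermitian_iff_isSymm.2 (hB.add ((isSymm_diagonal a).smul s))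
  · have hv : 0 < ∑ i, v i ^ 2 := by
      obtain ⟨i, hi⟩ := Function.ne_iff.1 hv
      exact Finset.sum_pos' (fun i _ => sq_nonneg _)
        ⟨i, Finset.mem_univ i, pow_two_pos_of_ne_zero hi⟩
    have hdiag : m * ∑ i, v i ^ 2 ≤ v ⬝ᵥ diagonal a *ᵥ v := by
      simp only [mulVec_diagonal, dotProduct, Finset.mul_sum]
      exact Finset.sum_le_sum fun i _ => by nlinarith [ham i, sq_nonneg (v i)]
    rw [star_trivial, add_mulVec, dotProduct_add, smul_mulVec, dotProduct_smul, smul_eq_mul]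
    nlinarith [hBc v, mul_le_mul_of_nonneg_left hdiag hs]

theorem convexOn_dotProduct_mulVec {M : Matrix ι ι ℝ} (hM : ∀ v, 0 ≤ v ⬝ᵥ M *ᵥ v) :
    ConvexOn ℝ univ fun v : ι → ℝ => v ⬝ᵥ M *ᵥ v := by
  refine ⟨convex_univ, fun u _ w _ α β hα hβ hαβ => ?_⟩
  obtain rfl : β = 1 - α := by linarith
  have huw := hM (u - w)
  simp only [mulVec_add, mulVec_sub, mulVec_smul, dotProduct_add, dotProduct_sub, add_dotProduct,
    sub_dotProduct, dotProduct_smul, smul_dotProduct, smul_eq_mul] at huw ⊢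
  -- `α q(u) + β q(w) - q(αu + βw) = αβ q(u - w)`
  nlinarith [mul_nonneg (mul_nonneg hα hβ) huw]

theorem convexOn_sum_comp_apply {φ : ι → ℝ → ℝ} (hφ : ∀ i, ConvexOn ℝ univ (φ i)) :
    ConvexOn ℝ univ fun y : ι → ℝ => ∑ i, φ i (y i) := by
  refine ⟨convex_univ, fun u _ w _ α β hα hβ hαβ => ?_⟩
  simp only [Pi.add_apply, Pi.smul_apply, smul_eq_mul, Finset.mul_sum, ← Finset.sum_add_distrib]
  exact Finset.sum_le_sum fun i _ => (hφ i).2 (mem_univ _) (mem_univ _) hα hβ hαβ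

theorem dotProduct_mulVec_self_eq_sum (M : Matrix ι ι ℝ) (v : ι → ℝ) :
    v ⬝ᵥ M *ᵥ v = ∑ i, ∑ j, M i j * (v i * v j) := by
  simp only [dotProduct, mulVec, Finset.mul_sum]
  exact Finset.sum_congr rfl fun i _ => Finset.sum_congr rfl fun j _ => by ring

end

theorem setIntegral_univ_pi_prod_s16 {ι : Type*} [Fintype ι] (s : ι → Set ℝ) (g : ι → ℝ → ℝ) :
    ∫ τ in univ.pi s, ∏ i, g i (τ i) = ∏ i, ∫ r in s i, g i r := by
  rw [volume_pi, Measure.restrict_pi_pi, integral_fintype_prod_eq_prod]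

theorem setIntegral_Icc_pow {l u : ℝ} (hlu : l ≤ u) (m : ℕ) :
    ∫ r in Icc l u, r ^ m = (u ^ (m + 1) - l ^ (m + 1)) / (m + 1) := by
  rw [integral_Icc_eq_integral_Ioc, ← intervalIntegral.integral_of_le hlu, integral_pow]

section Steklov

variable {n : ℕ} {x : Fin n → ℝ} {t : ℝ}

theorem steklov_monomial (ht : 0 < t) (m : Fin n → ℕ) :
    steklov (fun τ => ∏ k, τ k ^ m k) x t
      = ∏ k, ((x k + t) ^ (m k + 1) - (x k - t) ^ (m k + 1)) / ((m k + 1) * (2 * t)) := by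
  rw [steklov, setIntegral_univ_pi_prod_s16 _ fun k r => r ^ m k,
    Finset.prod_congr rfl fun k _ => setIntegral_Icc_pow (by linarith) (m k),
    Finset.prod_div_distrib, Finset.prod_div_distrib, Finset.prod_mul_distrib, Finset.prod_const,
    Finset.card_univ, Fintype.card_fin]
  ring

theorem steklov_pow_apply (ht : 0 < t) (i : Fin n) (m : ℕ) :
    steklov (fun τ => τ i ^ m) x t
      = ((x i + t) ^ (m + 1) - (x i - t) ^ (m + 1)) / ((m + 1) * (2 * t)) := by
  have hm : ∀ k ≠ i, (Pi.single i m : Fin n → ℕ) k = 0 := fun k hk => by simp [hk]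
  have hmono := steklov_monomial (x := x) ht (Pi.single i m)
  rw [Fintype.prod_eq_single i fun k hk => by rw [hm k hk]; field_simp; ring, Pi.single_eq_same]
    at hmono
  convert hmono using 3 with τ
  rw [Fintype.prod_eq_single i fun k hk => by rw [hm k hk, pow_zero], Pi.single_eq_same]

theorem steklov_apply_mul_apply (ht : 0 < t) (i j : Fin n) :
    steklov (fun τ => τ i * τ j) x t = x i * x j + if i = j then t ^ 2 / 3 else 0 := by
  obtain rfl | hij := eq_or_ne i j
  · simp only [← sq, steklov_pow_apply ht, if_true]
    field_simp
    ring
  · set m : Fin n → ℕ := Pi.single i 1 + Pi.single j 1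
    have hmi : m i = 1 := by simp [m, hij.symm]
    have hmj : m j = 1 := by simp [m, hij]
    have hm : ∀ k, k ≠ i ∧ k ≠ j → m k = 0 := fun k hk => by
      simp [m, Pi.single_eq_of_ne hk.1, Pi.single_eq_of_ne hk.2]
    have hmono := steklov_monomial (x := x) ht m
    rw [Fintype.prod_eq_mul i j hij fun k hk => by rw [hm k hk]; field_simp; ring, hmi, hmj]
      at hmono
    convert hmono using 3 with τ
    · rw [Fintype.prod_eq_mul i j hij fun k hk => by rw [hm k hk, pow_zero], hmi, hmj, pow_one,
        pow_one]
    · rw [if_neg hij]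
      field_simp
      ring

theorem steklov_add {f g : (Fin n → ℝ) → ℝ} (hf : Continuous f) (hg : Continuous g) :
    steklov (fun τ => f τ + g τ) x t = steklov f x t + steklov g x t := by
  have hbox : IsCompact (univ.pi fun i => Icc (x i - t) (x i + t)) :=
    isCompact_univ_pi fun i => isCompact_Icc
  rw [steklov, steklov, steklov, integral_add (hf.continuousOn.integrableOn_compact hbox)
    (hg.continuousOn.integrableOn_compact hbox), mul_add]

theorem steklov_sum {ι : Type*} (s : Finset ι) {f : ι → (Fin n → ℝ) → ℝ}
    (hf : ∀ i ∈ s, Continuous (f i)) :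
    steklov (fun τ => ∑ i ∈ s, f i τ) x t = ∑ i ∈ s, steklov (f i) x t := by
  have hbox : IsCompact (univ.pi fun i => Icc (x i - t) (x i + t)) :=
    isCompact_univ_pi fun i => isCompact_Icc
  rw [steklov, integral_finsetSum s fun i hi => (hf i hi).continuousOn.integrableOn_compact hbox,
    Finset.mul_sum]
  rfl

theorem steklov_const_mul (f : (Fin n → ℝ) → ℝ) (c : ℝ) :
    steklov (fun τ => c * f τ) x t = c * steklov f x t := by
  rw [steklov, steklov, integral_const_mul, mul_left_comm]

theorem steklov_apply (ht : 0 < t) (i : Fin n) : steklov (fun τ => τ i) x t = x i := by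
  have := steklov_pow_apply (x := x) ht i 1
  simp only [pow_one] at this
  rw [this]
  field_simp
  ring

end Steklov

section Hessian

variable {n : ℕ} {x : Fin n → ℝ}

theorem pd_eq_of_hasFDerivAt {f : (Fin n → ℝ) → ℝ} {f' : (Fin n → ℝ) →L[ℝ] ℝ}
    (hf : HasFDerivAt f f' x) (i : Fin n) : pd i f x = f' (Pi.single i 1) := by
  rw [pd, hf.fderiv]

theorem pd_add {f g : (Fin n → ℝ) → ℝ} (hf : DifferentiableAt ℝ f x)
    (hg : DifferentiableAt ℝ g x) (i : Fin n) :
    pd i (fun y => f y + g y) x = pd i f x + pd i g x := by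
  simp only [pd, fderiv_fun_add hf hg, _root_.add_apply]

theorem pd_sum {ι : Type*} (s : Finset ι) {f : ι → (Fin n → ℝ) → ℝ}
    (hf : ∀ k ∈ s, DifferentiableAt ℝ (f k) x) (i : Fin n) :
    pd i (fun y => ∑ k ∈ s, f k y) x = ∑ k ∈ s, pd i (f k) x := by
  simp only [pd, fderiv_fun_sum hf, _root_.sum_apply]

theorem pd_comp_apply {ψ : ℝ → ℝ} {ψ' : ℝ} {j : Fin n} (hψ : HasDerivAt ψ ψ' (x j))
    (i : Fin n) : pd i (fun y => ψ (y j)) x = if i = j then ψ' else 0 := by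
  rw [pd_eq_of_hasFDerivAt (f := fun y => ψ (y j))
    (hψ.comp_hasFDerivAt x (hasFDerivAt_apply j x))]
  simp [Pi.single_apply, eq_comm (a := j)]

theorem ContDiff.differentiable_pd {f : (Fin n → ℝ) → ℝ} (hf : ContDiff ℝ 2 f) (i : Fin n) :
    Differentiable ℝ (pd i f) :=
  ((hf.fderiv_right (m := 1) le_rfl).clm_apply contDiff_const).differentiable one_ne_zero

theorem hess_add {f g : (Fin n → ℝ) → ℝ} (hf : ContDiff ℝ 2 f) (hg : ContDiff ℝ 2 g) :
    hess (fun y => f y + g y) x = hess f x + hess g x := by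
  have hfirst : ∀ j, pd j (fun y => f y + g y) = fun y => pd j f y + pd j g y := fun j =>
    funext fun y => pd_add (hf.differentiable two_ne_zero y) (hg.differentiable two_ne_zero y) j
  ext i j
  simp only [hess, of_apply, Matrix.add_apply, hfirst]
  exact pd_add (hf.differentiable_pd j x) (hg.differentiable_pd j x) i

theorem hess_sum_comp_apply {φ : Fin n → ℝ → ℝ} {φ' φ'' : Fin n → ℝ → ℝ}
    (hφ : ∀ i s, HasDerivAt (φ i) (φ' i s) s) (hφ' : ∀ i s, HasDerivAt (φ' i) (φ'' i s) s) :
    hess (fun y => ∑ i, φ i (y i)) x = diagonal fun i => φ'' i (x i) := by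
  have hfirst : ∀ j, pd j (fun y => ∑ i, φ i (y i)) = fun y => φ' j (y j) := fun j =>
    funext fun y => by
      rw [pd_sum (f := fun i y => φ i (y i)) _ fun i _ =>
        (hφ i (y i)).differentiableAt.comp y (differentiableAt_apply i y)]
      simp [pd_comp_apply (hφ _ _)]
  ext i j
  rw [hess, of_apply, hfirst, pd_comp_apply (hφ' j _), diagonal_apply]
  obtain rfl | hij := eq_or_ne i j <;> simp [*]

theorem pd_dotProduct_mulVec_self (M : Matrix (Fin n) (Fin n) ℝ) (j : Fin n) :
    pd j (fun y => y ⬝ᵥ M *ᵥ y) = fun y => ((M + Mᵀ) *ᵥ y) j := by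
  funext y
  have happ := fun i => hasFDerivAt_apply (𝕜 := ℝ) (F' := fun _ : Fin n => ℝ) i y
  have h := HasFDerivAt.fun_sum fun i (_ : i ∈ Finset.univ) => HasFDerivAt.fun_sum
    fun k (_ : k ∈ Finset.univ) => ((happ i).fun_mul (happ k)).const_mul (M i k)
  rw [funext (dotProduct_mulVec_self_eq_sum M), pd_eq_of_hasFDerivAt h]
  simp [Pi.single_apply, mulVec, dotProduct, add_mul, Finset.sum_add_distrib, add_comm]

theorem pd_mulVec_apply (N : Matrix (Fin n) (Fin n) ℝ) (i j : Fin n) :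
    pd i (fun y => (N *ᵥ y) j) x = N j i := by
  have h := HasFDerivAt.fun_sum fun k (_ : k ∈ Finset.univ) =>
    (hasFDerivAt_apply (𝕜 := ℝ) (F' := fun _ : Fin n => ℝ) k x).const_mul (N j k)
  simp only [mulVec, dotProduct]
  rw [pd_eq_of_hasFDerivAt h]
  simp [Pi.single_apply]

theorem hess_dotProduct_mulVec_self (M : Matrix (Fin n) (Fin n) ℝ) :
    hess (fun y => y ⬝ᵥ M *ᵥ y) x = M + Mᵀ := by
  ext i j
  rw [hess, of_apply, pd_dotProduct_mulVec_self, pd_mulVec_apply, Matrix.add_apply,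
    Matrix.add_apply, transpose_apply, transpose_apply, add_comm]

end Hessian

section NormalQuartic

variable {n : ℕ} (a d : Fin n → ℝ) (B : Matrix (Fin n) (Fin n) ℝ) {t : ℝ}

def normalQuartic (x : Fin n → ℝ) : ℝ :=
  ∑ i, a i * x i ^ 4 + x ⬝ᵥ B *ᵥ x + d ⬝ᵥ x

theorem steklov_normalQuartic (ht : 0 < t) (x : Fin n → ℝ) :
    steklov (normalQuartic a d B) x t
      = ∑ i, (a i * x i ^ 4 + d i * x i + (a i * t ^ 4 / 5 + B i i * t ^ 2 / 3))
        + x ⬝ᵥ (B + (2 * t ^ 2) • diagonal a) *ᵥ x := by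
  unfold normalQuartic
  have hquartic : ∀ i, ((x i + t) ^ (4 + 1) - (x i - t) ^ (4 + 1)) / (((4 : ℕ) + 1) * (2 * t))
      = x i ^ 4 + 2 * t ^ 2 * x i ^ 2 + t ^ 4 / 5 := fun i => by
    field_simp
    ring
  simp only [dotProduct_mulVec_self_eq_sum]
  simp (disch := fun_prop) only [dotProduct, steklov_add, steklov_sum, steklov_const_mul,
    steklov_pow_apply ht, hquartic, steklov_apply ht, steklov_apply_mul_apply ht]
  simp only [← Finset.sum_add_distrib]
  refine Finset.sum_congr rfl fun i _ => ?_
  simp only [Matrix.add_apply, Matrix.smul_apply, diagonal_apply, smul_eq_mul, mul_add, add_mul,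
    mul_ite, ite_mul, mul_zero, zero_mul, Finset.sum_add_distrib, Finset.sum_ite_eq,
    Finset.mem_univ, if_true]
  ring

theorem hess_steklov_normalQuartic (hB : B.IsSymm) (ht : 0 < t) (x : Fin n → ℝ) :
    hess (fun y => steklov (normalQuartic a d B) y t) x
      = (12 : ℝ) • diagonal (fun i => a i * x i ^ 2) + (2 : ℝ) • B
        + (4 * t ^ 2) • diagonal a := by
  simp_rw [steklov_normalQuartic a d B ht]
  have hφ : ∀ i s, HasDerivAt
      (fun s => a i * s ^ 4 + d i * s + (a i * t ^ 4 / 5 + B i i * t ^ 2 / 3))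
      (4 * a i * s ^ 3 + d i) s := fun i s =>
    (((hasDerivAt_pow 4 s).const_mul (a i)).add ((hasDerivAt_id' s).const_mul (d i))).add_const
      _ |>.congr_deriv (by norm_num; ring)
  have hφ' : ∀ i s, HasDerivAt (fun s => 4 * a i * s ^ 3 + d i) (12 * (a i * s ^ 2)) s :=
    fun i s => ((hasDerivAt_pow 3 s).const_mul (4 * a i)).add_const (d i) |>.congr_deriv
      (by norm_num; ring)
  rw [hess_add (by fun_prop) (by simp only [dotProduct_mulVec_self_eq_sum]; fun_prop),
    hess_sum_comp_apply hφ hφ', hess_dotProduct_mulVec_self,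
    (hB.add ((isSymm_diagonal a).smul _)).eq, ← two_smul ℝ]
  change diagonal ((12 : ℝ) • fun i => a i * x i ^ 2) + _ = _
  rw [diagonal_smul]
  module

theorem convexOn_steklov_normalQuartic (ha : 0 ≤ a) (ht : 0 < t)
    (hM : (B + (2 * t ^ 2) • diagonal a).PosSemidef) :
    ConvexOn ℝ Set.univ fun y => steklov (normalQuartic a d B) y t := by
  simp_rw [steklov_normalQuartic a d B ht]
  refine (convexOn_sum_comp_apply (φ := fun i s =>
    a i * s ^ 4 + d i * s + (a i * t ^ 4 / 5 + B i i * t ^ 2 / 3)) fun i => ?_).add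
    (convexOn_dotProduct_mulVec fun v => by simpa using hM.dotProduct_mulVec_nonneg v)
  exact (((Even.convexOn_pow (by decide : Even 4)).smul (ha i)).add
    ((LinearMap.mulLeft ℝ (d i)).convexOn convex_univ)).add_const _

theorem posDef_hessian_of_posDef (ha : 0 ≤ a) (hM : (B + (2 * t ^ 2) • diagonal a).PosDef)
    (x : Fin n → ℝ) :
    ((12 : ℝ) • diagonal (fun i => a i * x i ^ 2) + (2 : ℝ) • B
      + (4 * t ^ 2) • diagonal a).PosDef := by
  rw [show (12 : ℝ) • diagonal (fun i => a i * x i ^ 2) + (2 : ℝ) • B + (4 * t ^ 2) • diagonal a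
      = (2 : ℝ) • (B + (2 * t ^ 2) • diagonal a) + (12 : ℝ) • diagonal (fun i => a i * x i ^ 2)
    by module]
  exact (hM.smul two_pos).add_posSemidef
    ((PosSemidef.diagonal fun i => mul_nonneg (ha i) (sq_nonneg (x i))).smul (by norm_num))

end NormalQuartic

theorem normal_polynomial_steklov_convexification_general {n : ℕ} (a d : Fin n → ℝ)
    (B : Matrix (Fin n) (Fin n) ℝ) (hB : B.IsSymm)
    (lamB : ℝ)
    (hlamB₁ : ∀ v : Fin n → ℝ, (∑ i, (v i) ^ 2) = 1 → lamB ≤ v ⬝ᵥ B.mulVec v)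
    (ak : ℝ) (hak₁ : ∀ i, ak ≤ a i) (hakpos : 0 < ak)
    (f : (Fin n → ℝ) → ℝ)
    (hf : ∀ x, f x = (∑ i, a i * (x i) ^ 4) + x ⬝ᵥ B.mulVec x + d ⬝ᵥ x) :
    ∀ t > Real.sqrt (|lamB| / (2 * ak)),
      (∀ x : Fin n → ℝ,
        hess (fun y => steklov f y t) x
          = (12 : ℝ) • Matrix.diagonal (fun i => a i * (x i) ^ 2) + (2 : ℝ) • B
            + (4 * t ^ 2) • Matrix.diagonal a
        ∧ ((12 : ℝ) • Matrix.diagonal (fun i => a i * (x i) ^ 2) + (2 : ℝ) • B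
            + (4 * t ^ 2) • Matrix.diagonal a).PosDef)
      ∧ ConvexOn ℝ Set.univ (fun y => steklov f y t) := by
  intro t ht
  have ht0 : 0 < t := (Real.sqrt_nonneg _).trans_lt ht
  have hgap : 0 < lamB + 2 * t ^ 2 * ak := by
    have h := (Real.sqrt_lt' ht0).1 ht
    rw [div_lt_iff₀ (by positivity)] at h
    linarith [neg_abs_le lamB]
  have ha : 0 ≤ a := fun i => hakpos.le.trans (hak₁ i)
  have hM : (B + (2 * t ^ 2) • diagonal a).PosDef := posDef_add_smul_diagonal hB
    (mul_sum_sq_le_dotProduct_mulVec hlamB₁) hak₁ (by positivity) hgap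
  obtain rfl : f = normalQuartic a d B := funext hf
  exact ⟨fun x => ⟨hess_steklov_normalQuartic a d B hB ht0 x, posDef_hessian_of_posDef a B ha hM x⟩,
    convexOn_steklov_normalQuartic a d B ha ht0 hM.posSemidef⟩

/-- For the normal polynomial `f(x) = Σᵢ aᵢxᵢ⁴ + xᵀBx + dᵀx` with `B` symmetric and not
positive semidefinite (smallest eigenvalue `λₙ(B) < 0`, characterized via the Rayleigh
quotient) and `a_k := minᵢ aᵢ > 0`: for every `t > t₀ := √(|λₙ(B)|/(2a_k))` and every `x`,
`∇ₓₓμ_f(x,t) = 12·diag(a₁x₁²,…,aₙxₙ²) + 2B + 4t²·diag(a)` is positive definite; hence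
`μ_f(·,t)` is convex on all of `ℝⁿ` for every `t > t₀`. -/
theorem normal_polynomial_steklov_convexification {n : ℕ} (a d : Fin n → ℝ)
    (B : Matrix (Fin n) (Fin n) ℝ) (hB : B.IsSymm)
    (lamB : ℝ)
    (hlamB₁ : ∀ v : Fin n → ℝ, (∑ i, (v i) ^ 2) = 1 → lamB ≤ v ⬝ᵥ B.mulVec v)
    (hlamB₂ : ∃ v : Fin n → ℝ, (∑ i, (v i) ^ 2) = 1 ∧ v ⬝ᵥ B.mulVec v = lamB)
    (hlamBneg : lamB < 0)
    (ak : ℝ) (hak₁ : ∀ i, ak ≤ a i) (hak₂ : ∃ i, a i = ak) (hakpos : 0 < ak)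
    (f : (Fin n → ℝ) → ℝ)
    (hf : ∀ x, f x = (∑ i, a i * (x i) ^ 4) + x ⬝ᵥ B.mulVec x + d ⬝ᵥ x) :
    ∀ t > Real.sqrt (|lamB| / (2 * ak)),
      (∀ x : Fin n → ℝ,
        hess (fun y => steklov f y t) x
          = (12 : ℝ) • Matrix.diagonal (fun i => a i * (x i) ^ 2) + (2 : ℝ) • B
            + (4 * t ^ 2) • Matrix.diagonal a
        ∧ ((12 : ℝ) • Matrix.diagonal (fun i => a i * (x i) ^ 2) + (2 : ℝ) • B
            + (4 * t ^ 2) • Matrix.diagonal a).PosDef)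
      ∧ ConvexOn ℝ Set.univ (fun y => steklov f y t) :=
  normal_polynomial_steklov_convexification_general a d B hB lamB hlamB₁ ak hak₁ hakpos f hf
end

section
/- Let f : ℝⁿ → ℝ be the normal polynomial f(x) = Σ_{i=1}^n a_i x_i⁴ + xᵀBx + dᵀx with B symmetric, d ∈ ℝⁿ, and a_k := min_{i=1,…,n} a_i > 0. For ε > 0 define L(ε) := max{ ‖d‖₁/ε, √((n·ρ(B) + ε)/a_k) }, where ρ(B) is the spectral radius of B. Then f(x) > 0 = f(0) for every x with ‖x‖_∞ > L(ε); consequently every global minimizer x* of f satisfies ‖x*‖_∞ ≤ L(ε), i.e., argmin f ⊆ B_∞[0, L(ε)] := {x : ‖x‖_∞ ≤ L(ε)}. -/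
open MeasureTheory Matrix Filter

/-- For the normal polynomial `f(x) = Σᵢ aᵢxᵢ⁴ + xᵀBx + dᵀx` with `B` symmetric (with
largest/smallest eigenvalues `λ₁(B), λₙ(B)` characterized via the Rayleigh quotient, and
spectral radius `ρ(B) = max{|λ₁(B)|, |λₙ(B)|}`) and `a_k := minᵢ aᵢ > 0`: for every `ε > 0`,
setting `L(ε) := max{‖d‖₁/ε, √((n·ρ(B)+ε)/a_k)}`, one has `f(x) > 0 = f(0)` whenever
`‖x‖_∞ > L(ε)`; hence every global minimizer `x*` satisfies `‖x*‖_∞ ≤ L(ε)`.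
(Note: on `Fin n → ℝ` the norm `‖x‖` is the supremum norm.) -/
theorem normal_polynomial_minimizers_in_sup_ball {n : ℕ} (a d : Fin n → ℝ)
    (B : Matrix (Fin n) (Fin n) ℝ) (hB : B.IsSymm)
    (lam1 lamn : ℝ)
    (hl1 : ∀ v : Fin n → ℝ, (∑ i, (v i) ^ 2) = 1 → v ⬝ᵥ B.mulVec v ≤ lam1)
    (hl1' : ∃ v : Fin n → ℝ, (∑ i, (v i) ^ 2) = 1 ∧ v ⬝ᵥ B.mulVec v = lam1)
    (hln : ∀ v : Fin n → ℝ, (∑ i, (v i) ^ 2) = 1 → lamn ≤ v ⬝ᵥ B.mulVec v)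
    (hln' : ∃ v : Fin n → ℝ, (∑ i, (v i) ^ 2) = 1 ∧ v ⬝ᵥ B.mulVec v = lamn)
    (ak : ℝ) (hak₁ : ∀ i, ak ≤ a i) (hak₂ : ∃ i, a i = ak) (hakpos : 0 < ak)
    (f : (Fin n → ℝ) → ℝ)
    (hf : ∀ x, f x = (∑ i, a i * (x i) ^ 4) + x ⬝ᵥ B.mulVec x + d ⬝ᵥ x)
    (ε : ℝ) (hε : 0 < ε) :
    (∀ x : Fin n → ℝ,
      max ((∑ i, |d i|) / ε)
          (Real.sqrt (((n : ℝ) * max |lam1| |lamn| + ε) / ak)) < ‖x‖ →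
      0 < f x)
    ∧ f 0 = 0
    ∧ ∀ xs : Fin n → ℝ, (∀ y, f xs ≤ f y) →
        ‖xs‖ ≤ max ((∑ i, |d i|) / ε)
          (Real.sqrt (((n : ℝ) * max |lam1| |lamn| + ε) / ak)) := by
    classical
  set ρ := max |lam1| |lamn| with hρdef
  set L := max ((∑ i, |d i|) / ε)
      (Real.sqrt (((n : ℝ) * ρ + ε) / ak)) with hLdef
  have hρ0 : 0 ≤ ρ := le_trans (abs_nonneg lam1) (le_max_left _ _)
  have hL0 : 0 ≤ L := le_trans (Real.sqrt_nonneg _) (le_max_right _ _)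
  -- lower bound for the quadratic form
  have quad : ∀ x : Fin n → ℝ, -(ρ * ∑ i, (x i) ^ 2) ≤ x ⬝ᵥ B.mulVec x := by
    intro x
    by_cases hx : x = 0
    · simp [hx]
    · have hs : 0 < ∑ i, (x i) ^ 2 := by
        obtain ⟨i, hi⟩ : ∃ i, x i ≠ 0 := by
          by_contra h; push_neg at h; exact hx (funext h)
        exact Finset.sum_pos' (fun j _ => sq_nonneg _)
          ⟨i, Finset.mem_univ i, by positivity⟩
      set s := Real.sqrt (∑ i, (x i) ^ 2) with hsdef
      have hspos : 0 < s := Real.sqrt_pos.mpr hs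
      have hsq : s ^ 2 = ∑ i, (x i) ^ 2 := Real.sq_sqrt hs.le
      set v := s⁻¹ • x with hv
      have hvnorm : (∑ i, (v i) ^ 2) = 1 := by
        have h1 : ∑ i, (v i) ^ 2 = s⁻¹ ^ 2 * ∑ i, (x i) ^ 2 := by
          rw [Finset.mul_sum]
          refine Finset.sum_congr rfl fun i _ => ?_
          simp [hv, mul_pow]
        rw [h1, ← hsq]
        field_simp
      have hquadeq : v ⬝ᵥ B.mulVec v = s⁻¹ ^ 2 * (x ⬝ᵥ B.mulVec x) := by
        simp [hv, Matrix.mulVec_smul, smul_eq_mul]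
        ring
      have h1 := hln v hvnorm
      rw [hquadeq] at h1
      have hlamn : -ρ ≤ lamn := by
        have : |lamn| ≤ ρ := le_max_right _ _
        cases abs_le.mp this with
        | intro h _ => linarith
      have h2 : lamn * s ^ 2 ≤ x ⬝ᵥ B.mulVec x := by
        have h2a := mul_le_mul_of_nonneg_right h1 (sq_nonneg s)
        have h2b : s⁻¹ ^ 2 * (x ⬝ᵥ B.mulVec x) * s ^ 2 = x ⬝ᵥ B.mulVec x := by
          field_simp
        linarith [h2a, h2b.le, h2b.ge]
      have h3 : -ρ * s ^ 2 ≤ lamn * s ^ 2 :=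
        mul_le_mul_of_nonneg_right hlamn (sq_nonneg s)
      rw [hsq] at h2 h3
      linarith
  -- main positivity claim
  have key : ∀ x : Fin n → ℝ, L < ‖x‖ → 0 < f x := by
    intro x hx
    have hM0' : 0 < ‖x‖ := lt_of_le_of_lt hL0 hx
    have hne : Nonempty (Fin n) := by
      by_contra h
      have hx0 : x = 0 := funext fun i => absurd ⟨i⟩ h
      rw [hx0, norm_zero] at hM0'
      exact lt_irrefl _ hM0'
    set M := ‖x‖ with hM
    have hM0 : 0 < M := hM0'
    obtain ⟨i₀, _, hi₀⟩ := Finset.exists_mem_eq_sup (Finset.univ : Finset (Fin n))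
      Finset.univ_nonempty (fun i => ‖x i‖₊)
    have hMi : M = |x i₀| := by
      rw [hM, Pi.norm_def, hi₀]
      simp [Real.norm_eq_abs]
    -- quartic term
    have hquartic : ak * M ^ 4 ≤ ∑ i, a i * (x i) ^ 4 := by
      have h1 : ak * M ^ 4 = ak * (x i₀) ^ 4 := by
        rw [hMi, ← abs_pow, abs_of_nonneg (by positivity : (0:ℝ) ≤ (x i₀) ^ 4)]
      have h2 : ak * (x i₀) ^ 4 ≤ a i₀ * (x i₀) ^ 4 :=
        mul_le_mul_of_nonneg_right (hak₁ i₀) (by positivity)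
      have h3 : a i₀ * (x i₀) ^ 4 ≤ ∑ i, a i * (x i) ^ 4 := by
        refine Finset.single_le_sum (f := fun i => a i * (x i) ^ 4)
          (fun i _ => ?_) (Finset.mem_univ i₀)
        have := lt_of_lt_of_le hakpos (hak₁ i)
        positivity
      linarith
    -- l2 bound
    have hl2 : ∑ i, (x i) ^ 2 ≤ (n : ℝ) * M ^ 2 := by
      have : ∀ i ∈ Finset.univ, (x i) ^ 2 ≤ M ^ 2 := by
        intro i _
        have h1 : |x i| ≤ M := by
          rw [hM]; exact norm_le_pi_norm x i
        have := sq_abs (x i)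
        nlinarith [abs_nonneg (x i)]
      calc ∑ i, (x i) ^ 2 ≤ ∑ _i : Fin n, M ^ 2 := Finset.sum_le_sum this
        _ = (n : ℝ) * M ^ 2 := by simp [Finset.sum_const, mul_comm]
    have hquad2 : -(ρ * ((n : ℝ) * M ^ 2)) ≤ x ⬝ᵥ B.mulVec x := by
      have h1 := quad x
      have h2 : ρ * ∑ i, (x i) ^ 2 ≤ ρ * ((n : ℝ) * M ^ 2) :=
        mul_le_mul_of_nonneg_left hl2 hρ0
      linarith
    -- linear term
    have hlin : -((∑ i, |d i|) * M) ≤ d ⬝ᵥ x := by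
      have h1 : ∀ i ∈ Finset.univ, -(|d i| * M) ≤ d i * x i := by
        intro i _
        have hxi : |x i| ≤ M := by rw [hM]; exact norm_le_pi_norm x i
        have := neg_abs_le (d i * x i)
        have habs : |d i * x i| ≤ |d i| * M := by
          rw [abs_mul]
          exact mul_le_mul_of_nonneg_left hxi (abs_nonneg _)
        linarith
      have h2 := Finset.sum_le_sum h1
      have h3 : ∑ i, -(|d i| * M) = -((∑ i, |d i|) * M) := by
        rw [Finset.sum_neg_distrib, Finset.sum_mul]
      rw [h3] at h2
      simpa [dotProduct] using h2
    -- from the radius hypothesis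
    have hsqrt : Real.sqrt (((n : ℝ) * ρ + ε) / ak) < M :=
      lt_of_le_of_lt (le_max_right _ _) hx
    have hc0 : 0 ≤ ((n : ℝ) * ρ + ε) / ak := by positivity
    have hMsq : ((n : ℝ) * ρ + ε) / ak < M ^ 2 := by
      nlinarith [Real.sq_sqrt hc0, Real.sqrt_nonneg (((n : ℝ) * ρ + ε) / ak), hsqrt, hM0]
    have h1 : (n : ℝ) * ρ + ε < ak * M ^ 2 := by
      rw [div_lt_iff₀ hakpos] at hMsq
      linarith [hMsq]
    have hd : (∑ i, |d i|) < ε * M := by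
      have := lt_of_le_of_lt (le_max_left ((∑ i, |d i|) / ε) _) hx
      rw [div_lt_iff₀ hε] at this
      linarith
    rw [hf x]
    nlinarith [mul_lt_mul_of_pos_right h1 (mul_pos hM0 hM0),
      mul_lt_mul_of_pos_right hd hM0, sq_nonneg M]
  have hf0 : f 0 = 0 := by simp [hf]
  refine ⟨key, hf0, ?_⟩
  intro xs hxs
  by_contra h
  push_neg at h
  have := key xs h
  have h2 := hxs 0
  rw [hf0] at h2
  linarith
end
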